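/- arXiv:2502.15923 — 2 statements merged into one kernel-verified Lean document; each statement's English description precedes it below -/
import Mathlib

section
/- Under the hypotheses of the speed-gradient adaptive law $\dot\theta(t) = -\Gamma \delta(t) z(t)$ with $\delta(t) = (\theta(t)-\theta^*)^T z(t)$, $\Gamma$ symmetric positive definite, and $z$ continuous and bounded, the integral $\int_0^\infty \delta(s)^2\, ds$ is finite, i.e., $\delta \in L^2([0,\infty))$. -/
open Matrix MeasureTheory

theorem speed_gradient_error_L2 (m : ℕ)
    (Γ : Matrix (Fin m) (Fin m) ℝ) (hΓ : Γ.PosDef) (hΓsymm : Γ.IsSymm)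
    (θstar : Fin m → ℝ) (z θ : ℝ → Fin m → ℝ)
    (hz : Continuous z) (hzb : ∃ C, ∀ t, ‖z t‖ ≤ C)
    (δ : ℝ → ℝ) (hδ : ∀ t, δ t = dotProduct (θ t - θstar) (z t))
    (hθ : ∀ t, HasDerivAt θ ((-δ t) • Γ.mulVec (z t)) t) :
    IntegrableOn (fun s => δ s ^ 2) (Set.Ici (0:ℝ)) := by
  classical
  set A : Matrix (Fin m) (Fin m) ℝ := Γ⁻¹ with hA
  have hdet : IsUnit Γ.det := hΓ.det_pos.ne'.isUnit
  have hAΓ : A * Γ = 1 := Γ.nonsing_inv_mul hdet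
  have hΓA : Γ * A = 1 := Γ.mul_nonsing_inv hdet
  -- e t = θ t - θstar
  set e : ℝ → Fin m → ℝ := fun t => θ t - θstar with he
  -- the Lyapunov function
  set W : ℝ → ℝ := fun t => e t ⬝ᵥ A.mulVec (e t) with hW
  -- θ is continuous
  have hθcont : Continuous θ :=
    continuous_iff_continuousAt.2 fun t => (hθ t).continuousAt
  have hecont : Continuous e := hθcont.sub continuous_const
  have hδcont : Continuous δ := by
    have : δ = fun t => ∑ j, e t j * z t j := by
      funext t; rw [hδ t]; rfl
    rw [this]
    exact continuous_finset_sum _ fun j _ =>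
      ((continuous_apply j).comp hecont).mul ((continuous_apply j).comp hz)
  -- derivative of components of e
  have heder : ∀ t i, HasDerivAt (fun s => e s i)
      (-δ t * Γ.mulVec (z t) i) t := by
    intro t i
    have := (hasDerivAt_pi.1 (hθ t)) i
    have h' : HasDerivAt (fun s => θ s i - θstar i)
        (((-δ t) • Γ.mulVec (z t)) i) t := this.sub_const _
    simpa [he, Pi.smul_apply, smul_eq_mul] using h'
  -- derivative of W
  have hWder : ∀ t, HasDerivAt W (-2 * δ t ^ 2) t := by
    intro t
    have hWeq : W = fun s => ∑ i, e s i * ∑ j, A i j * e s j := by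
      funext s
      simp [hW, dotProduct, Matrix.mulVec, mul_comm]
    have hinner : ∀ i, HasDerivAt (fun s => ∑ j, A i j * e s j)
        (∑ j, A i j * (-δ t * Γ.mulVec (z t) j)) t := fun i =>
      HasDerivAt.fun_sum fun j _ => (heder t j).const_mul (A i j)
    have hsum : HasDerivAt (fun s => ∑ i, e s i * ∑ j, A i j * e s j)
        (∑ i, ((-δ t * Γ.mulVec (z t) i) * (∑ j, A i j * e t j)
          + e t i * (∑ j, A i j * (-δ t * Γ.mulVec (z t) j)))) t :=
      HasDerivAt.fun_sum fun i _ => (heder t i).mul (hinner i)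
    rw [hWeq]
    convert hsum using 1
    -- algebra: show the derivative equals -2 δ²
    have key2 : e t ⬝ᵥ A.mulVec (Γ.mulVec (z t)) = δ t := by
      rw [Matrix.mulVec_mulVec, hAΓ, Matrix.one_mulVec]
      exact (hδ t).symm
    have key1 : (Γ.mulVec (z t)) ⬝ᵥ A.mulVec (e t) = δ t := by
      rw [dotProduct_comm, Matrix.dotProduct_mulVec,
        ← Matrix.mulVec_transpose, hΓsymm.eq, Matrix.mulVec_mulVec, hΓA,
        Matrix.one_mulVec]
      exact (hδ t).symm
    have h1 : ∑ i, (-δ t * Γ.mulVec (z t) i) * (∑ j, A i j * e t j)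
        = -δ t * ((Γ.mulVec (z t)) ⬝ᵥ A.mulVec (e t)) := by
      rw [show (Γ.mulVec (z t)) ⬝ᵥ A.mulVec (e t)
          = ∑ i, (Γ.mulVec (z t)) i * (A.mulVec (e t)) i from rfl,
        Finset.mul_sum]
      refine Finset.sum_congr rfl fun i _ => ?_
      rw [show (A.mulVec (e t)) i = ∑ j, A i j * e t j from rfl]
      ring
    have h2 : ∑ i, e t i * (∑ j, A i j * (-δ t * Γ.mulVec (z t) j))
        = -δ t * (e t ⬝ᵥ A.mulVec (Γ.mulVec (z t))) := by
      rw [show e t ⬝ᵥ A.mulVec (Γ.mulVec (z t))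
          = ∑ i, e t i * (A.mulVec (Γ.mulVec (z t))) i from rfl,
        Finset.mul_sum]
      refine Finset.sum_congr rfl fun i _ => ?_
      rw [show (A.mulVec (Γ.mulVec (z t))) i
          = ∑ j, A i j * (Γ.mulVec (z t)) j from rfl]
      simp only [Finset.mul_sum]
      refine Finset.sum_congr rfl fun j _ => ?_
      ring
    rw [Finset.sum_add_distrib, h1, h2, key1, key2]
    ring
  -- W is nonneg
  have hApos := hΓ.inv
  have hWnonneg : ∀ t, 0 ≤ W t := by
    intro t
    rcases eq_or_ne (e t) 0 with h | h
    · simp [hW, h]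
    · have := hApos.dotProduct_mulVec_pos h
      simpa [hW, dotProduct_comm] using this.le
  -- interval integrability
  have hInt : ∀ b : ℝ, IntervalIntegrable (fun s => δ s ^ 2) volume 0 b :=
    fun b => ((hδcont.pow 2)).intervalIntegrable 0 b
  -- FTC bound
  have hbound : ∀ b : ℝ, (∫ s in (0:ℝ)..b, δ s ^ 2) = (W 0 - W b) / 2 := by
    intro b
    have : (∫ s in (0:ℝ)..b, -2 * δ s ^ 2) = W b - W 0 := by
      apply intervalIntegral.integral_eq_sub_of_hasDerivAt
      · intro s _; exact hWder s
      · exact (continuous_const.mul (hδcont.pow 2)).intervalIntegrable 0 b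
    have h2 : (∫ s in (0:ℝ)..b, -2 * δ s ^ 2)
        = -2 * ∫ s in (0:ℝ)..b, δ s ^ 2 := by
      rw [intervalIntegral.integral_const_mul]
    rw [h2] at this
    linarith
  have key : IntegrableOn (fun s => δ s ^ 2) (Set.Ioi (0:ℝ)) := by
    apply MeasureTheory.integrableOn_Ioi_of_intervalIntegral_norm_bounded
      (W 0 / 2) 0 (b := fun n : ℕ => (n : ℝ)) (l := Filter.atTop)
      (fun n => (hInt n).1) tendsto_natCast_atTop_atTop
    filter_upwards with n
    have : (∫ s in (0:ℝ)..(n:ℝ), ‖δ s ^ 2‖) = ∫ s in (0:ℝ)..(n:ℝ), δ s ^ 2 := by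
      congr 1; funext s; exact Real.norm_of_nonneg (sq_nonneg _)
    rw [this, hbound]
    have := hWnonneg (n : ℝ)
    linarith
  rw [integrableOn_Ici_iff_integrableOn_Ioi]
  exact key
end

section
/- Let $w : [0,\infty) \to \mathbb{R}^m$ be continuously differentiable and $z : [0,\infty) \to \mathbb{R}^m$ continuous and bounded. Suppose (i) $z$ is persistently exciting, i.e., there exist $L, \alpha, t_0 > 0$ such that $\int_t^{t+L} z(s) z(s)^T\, ds \succeq \alpha I_m$ for all $t > t_0$; (ii) $\dot w(t) \to 0$ as $t \to \infty$; (iii) $w(t)^T z(t) \to 0$ as $t \to \infty$; and (iv) $w$ is bounded. Then $w(t) \to 0$ as $t \to \infty$. -/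
open Matrix Filter

lemma dot_abs_le' (m : ℕ) (a b : Fin m → ℝ) :
    |dotProduct a b| ≤ m * (‖a‖ * ‖b‖) := by
  calc |dotProduct a b| = |∑ i, a i * b i| := rfl
    _ ≤ ∑ i, |a i * b i| := Finset.abs_sum_le_sum_abs _ _
    _ ≤ ∑ _i : Fin m, ‖a‖ * ‖b‖ := by
        refine Finset.sum_le_sum fun i _ => ?_
        rw [abs_mul]
        have h1 : |a i| ≤ ‖a‖ := by
          simpa [Real.norm_eq_abs] using norm_le_pi_norm a i
        have h2 : |b i| ≤ ‖b‖ := by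
          simpa [Real.norm_eq_abs] using norm_le_pi_norm b i
        exact mul_le_mul h1 h2 (abs_nonneg _) (norm_nonneg _)
    _ = m * (‖a‖ * ‖b‖) := by simp

theorem pe_convergence (m : ℕ) (w w' z : ℝ → Fin m → ℝ)
    (hw : ∀ t, HasDerivAt w (w' t) t) (hw'cont : Continuous w')
    (hz : Continuous z) (hzb : ∃ C, ∀ t, ‖z t‖ ≤ C)
    (L α t₀ : ℝ) (hL : 0 < L) (hα : 0 < α) (ht₀ : 0 < t₀)
    (hPE : ∀ t, t₀ < t → ∀ e : Fin m → ℝ,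
      α * ‖e‖ ^ 2 ≤ ∫ s in t..(t + L), (dotProduct e (z s)) ^ 2)
    (hw' : Tendsto w' atTop (nhds 0))
    (hwz : Tendsto (fun t => dotProduct (w t) (z t)) atTop (nhds 0))
    (hwb : ∃ C, ∀ t, ‖w t‖ ≤ C) :
    Tendsto w atTop (nhds 0) := by
  obtain ⟨C₀, hC₀⟩ := hzb
  set C : ℝ := max C₀ 1 with hCdef
  have hC : ∀ t, ‖z t‖ ≤ C := fun t => (hC₀ t).trans (le_max_left _ _)
  have hCpos : (0:ℝ) < C := lt_of_lt_of_le one_pos (le_max_right _ _)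
  rw [NormedAddCommGroup.tendsto_nhds_zero]
  intro ε hε
  set ε' : ℝ := ε / 2 with hε'def
  have hε' : 0 < ε' := by positivity
  set δ : ℝ := Real.sqrt (α / L) * ε' with hδdef
  have hδ : 0 < δ := by
    apply mul_pos _ hε'
    exact Real.sqrt_pos.mpr (by positivity)
  set κ : ℝ := δ / (2 * L * C * (m + 1)) with hκdef
  have hκ : 0 < κ := by positivity
  -- eventual bounds
  have h1 : ∀ᶠ u in atTop, ‖w' u‖ < κ :=
    (NormedAddCommGroup.tendsto_nhds_zero.mp hw') κ hκ
  have h2 : ∀ᶠ s in atTop, |dotProduct (w s) (z s)| < δ / 2 := by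
    have := (NormedAddCommGroup.tendsto_nhds_zero.mp hwz) (δ / 2) (by positivity)
    simpa [Real.norm_eq_abs] using this
  obtain ⟨T₁, hT₁⟩ := eventually_atTop.mp h1
  obtain ⟨T₂, hT₂⟩ := eventually_atTop.mp h2
  set T : ℝ := max (max T₁ T₂) (t₀ + 1) with hTdef
  filter_upwards [eventually_ge_atTop T] with t ht
  have htT₁ : T₁ ≤ t := le_trans (le_trans (le_max_left _ _) (le_max_left _ _)) ht
  have htT₂ : T₂ ≤ t := le_trans (le_trans (le_max_right _ _) (le_max_left _ _)) ht
  have htt₀ : t₀ < t := lt_of_lt_of_le (by linarith) (le_trans (le_max_right _ _) ht)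
  -- key pointwise bound on the interval
  have hbound : ∀ s ∈ Set.Icc t (t + L),
      (dotProduct (w t) (z s)) ^ 2 ≤ δ ^ 2 := by
    intro s hs
    obtain ⟨hs1, hs2⟩ := hs
    -- mean value bound
    have hmv : ‖w s - w t‖ ≤ κ * ‖s - t‖ := by
      apply Convex.norm_image_sub_le_of_norm_hasDerivWithin_le
        (f' := w') (s := Set.Icc t (t + L))
        (fun x _ => (hw x).hasDerivWithinAt)
        (fun x hx => le_of_lt (hT₁ x (le_trans htT₁ hx.1)))
        (convex_Icc _ _) ⟨le_refl _, by linarith⟩ ⟨hs1, hs2⟩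
    have hwdiff : ‖w t - w s‖ ≤ κ * L := by
      rw [← norm_neg]
      simp only [neg_sub]
      refine hmv.trans ?_
      have : ‖s - t‖ = s - t := by
        rw [Real.norm_eq_abs, abs_of_nonneg (by linarith)]
      rw [this]
      nlinarith
    have hdot1 : |dotProduct (w s) (z s)| < δ / 2 := hT₂ s (le_trans htT₂ hs1)
    have hdot2 : |dotProduct (w t - w s) (z s)| ≤ δ / 2 := by
      refine (dot_abs_le' m _ _).trans ?_
      have hz' : ‖z s‖ ≤ C := hC s
      have : (m:ℝ) * (‖w t - w s‖ * ‖z s‖) ≤ m * ((κ * L) * C) := by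
        apply mul_le_mul_of_nonneg_left _ (Nat.cast_nonneg m)
        exact mul_le_mul hwdiff hz' (norm_nonneg _) (by positivity)
      refine this.trans ?_
      rw [hκdef, div_mul_eq_mul_div, div_mul_eq_mul_div, ← mul_div_assoc,
        div_le_iff₀ (by positivity : (0:ℝ) < 2 * L * C * ((m:ℝ) + 1))]
      nlinarith [mul_pos (mul_pos hδ hL) hCpos]
    have habs : |dotProduct (w t) (z s)| ≤ δ := by
      have heq : dotProduct (w t) (z s) =
          dotProduct (w s) (z s) + dotProduct (w t - w s) (z s) := by
        rw [sub_dotProduct]; ring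
      rw [heq]
      calc |dotProduct (w s) (z s) + dotProduct (w t - w s) (z s)|
          ≤ |dotProduct (w s) (z s)| + |dotProduct (w t - w s) (z s)| :=
            abs_add_le _ _
        _ ≤ δ / 2 + δ / 2 := add_le_add hdot1.le hdot2
        _ = δ := by ring
    obtain ⟨ha, hb⟩ := abs_le.mp habs
    nlinarith
  -- continuity / integrability
  have hcont : Continuous fun s => (dotProduct (w t) (z s)) ^ 2 := by
    apply Continuous.pow
    simp only [dotProduct]
    exact continuous_finset_sum _ fun i _ =>
      continuous_const.mul ((continuous_apply i).comp hz)
  have hint1 : IntervalIntegrable (fun s => (dotProduct (w t) (z s)) ^ 2)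
      MeasureTheory.volume t (t + L) := hcont.intervalIntegrable _ _
  have hint2 : IntervalIntegrable (fun _ : ℝ => δ ^ 2)
      MeasureTheory.volume t (t + L) := intervalIntegrable_const
  have hmono : (∫ s in t..(t + L), (dotProduct (w t) (z s)) ^ 2)
      ≤ ∫ _s in t..(t + L), δ ^ 2 := by
    apply intervalIntegral.integral_mono_on (by linarith) hint1 hint2 hbound
  have hconst : (∫ _s in t..(t + L), δ ^ 2) = L * δ ^ 2 := by
    rw [intervalIntegral.integral_const, smul_eq_mul, add_sub_cancel_left]
  have hPEt := hPE t htt₀ (w t)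
  have hLδ : L * δ ^ 2 = α * ε' ^ 2 := by
    rw [hδdef, mul_pow, Real.sq_sqrt (by positivity : (0:ℝ) ≤ α / L)]
    field_simp
  have hkey : α * ‖w t‖ ^ 2 ≤ α * ε' ^ 2 := by
    calc α * ‖w t‖ ^ 2 ≤ ∫ s in t..(t + L), (dotProduct (w t) (z s)) ^ 2 := hPEt
      _ ≤ L * δ ^ 2 := hconst ▸ hmono
      _ = α * ε' ^ 2 := hLδ
  have hsq : ‖w t‖ ^ 2 ≤ ε' ^ 2 := le_of_mul_le_mul_left hkey hα
  have hle : ‖w t‖ ≤ ε' := by nlinarith [norm_nonneg (w t)]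
  have : ε' < ε := by rw [hε'def]; linarith
  linarith
end
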